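/- In a pseudoquandle P, for any p, q ∈ P, ker(p) ∩ ker(q) ⊆ ker(p * q). -/

import Mathlib

/-!
Write `t = p ⋆ q` for `s ∈ ker p ∩ ker q`. Right distributivity alone gives `t ⋆ s = t` and
`q ⋆ t = t`, and then that `t` and `u = s ⋆ t` absorb each other: `t ⋆ u = t = u ⋆ t`.
Idempotence turns this into `u = t`, via
`u = u ⋆ u = (s ⋆ u) ⋆ (t ⋆ u) = (s ⋆ u) ⋆ t = t`.
-/

namespace Pseudoquandle

variable {P : Type*} {op : P → P → P}

local infixl:70 " ⋆ " => op

def ker (op : P → P → P) (p : P) : Set P := {s | op p s = p ∧ op s p = p}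

def RightSelfDistrib (op : P → P → P) : Prop := ∀ x y z, op (op x y) z = op (op x z) (op y z)

theorem op_op_right_eq_self (dist : RightSelfDistrib op) {p q s : P}
    (hp : p ⋆ s = p) (hq : q ⋆ s = q) :
    (p ⋆ q) ⋆ s = p ⋆ q := by
  rw [dist, hp, hq]

theorem op_left_op_eq_self (dist : RightSelfDistrib op) {p q s : P}
    (hp : s ⋆ p = p) (hq : s ⋆ q = q) :
    q ⋆ (p ⋆ q) = p ⋆ q := by
  simpa only [hp, hq] using (dist s p q).symm

theorem op_op_self_right_eq_self (dist : RightSelfDistrib op) {q s t : P}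
    (hs : q ⋆ s = q) (ht : q ⋆ t = t) :
    t ⋆ (s ⋆ t) = t := by
  simpa only [hs, ht] using (dist q s t).symm

theorem op_self_op_eq_self (dist : RightSelfDistrib op) {q s t : P}
    (hs : s ⋆ q = q) (ht : q ⋆ t = t) :
    (s ⋆ t) ⋆ t = t := by
  simpa only [hs, ht] using (dist s q t).symm

theorem op_eq_right_of_absorb (dist : RightSelfDistrib op) (idem : ∀ x, x ⋆ x = x) {s t : P}
    (htu : t ⋆ (s ⋆ t) = t) (hut : (s ⋆ t) ⋆ t = t) : s ⋆ t = t :=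
  calc s ⋆ t = (s ⋆ t) ⋆ (s ⋆ t) := (idem _).symm
    _ = (s ⋆ (s ⋆ t)) ⋆ t := by rw [dist, htu]
    _ = t := by rw [dist, hut, hut]

theorem mem_ker_op (dist : RightSelfDistrib op) (idem : ∀ x, x ⋆ x = x) {p q s : P}
    (hp : s ∈ ker op p) (hq : s ∈ ker op q) : s ∈ ker op (p ⋆ q) := by
  obtain ⟨hps, hsp⟩ := hp
  obtain ⟨hqs, hsq⟩ := hq
  have hqt : q ⋆ (p ⋆ q) = p ⋆ q := op_left_op_eq_self dist hsp hsq
  exact ⟨op_op_right_eq_self dist hps hqs,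
    op_eq_right_of_absorb dist idem (op_op_self_right_eq_self dist hqs hqt)
      (op_self_op_eq_self dist hsq hqt)⟩

end Pseudoquandle

/-- In a pseudoquandle, `ker p ∩ ker q ⊆ ker (p * q)`. -/
theorem ker_inter_subset {P : Type*} (op : P → P → P)
    (idem : ∀ x, op x x = x)
    (dist : ∀ x y z, op (op x y) z = op (op x z) (op y z))
    (p q : P) :
    {s : P | op p s = p ∧ op s p = p} ∩ {s : P | op q s = q ∧ op s q = q}
      ⊆ {s : P | op (op p q) s = op p q ∧ op s (op p q) = op p q} :=
  fun _ ⟨hp, hq⟩ => Pseudoquandle.mem_ker_op dist idem hp hq
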